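/- arXiv:1706.05487 — 2 statements merged into one kernel-verified Lean document; each statement's English description precedes it below -/
import Mathlib

section
/- Let (X_i)_{i≥1} be a (χ,ρ)-attachment sequence. If (x_1,…,x_N) and (x'_1,…,x'_N) are both acceptable sequences and one is a permutation (rearrangement) of the other, then ℙ((X_1,…,X_N) = (x_1,…,x_N)) = ℙ((X_1,…,X_N) = (x'_1,…,x'_N)). -/
/-!
By the chain rule, the probability of an acceptable path `x` of length `n` is a product of
transition probabilities. Grouping the numerators by label, the `j`-th repeat of a label
contributes `j - χ` and the first appearance of label `k + 1` contributes `k χ + ρ`, while the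
denominators are `∏_{m=1}^{n-1} (m + ρ)`. The result depends only on the label counts and the
largest label, which are invariant under rearrangement.
-/

open MeasureTheory Finset

/-- A finite sequence `(x 0, …, x (n-1))` of positive integers is *acceptable* if
`x 0 = 1` and each subsequent entry exceeds the current maximum by at most one
(equivalently, the first occurrence of `k+1` comes strictly after the first
occurrence of `k`). -/
def Acceptable (n : ℕ) (x : ℕ → ℕ) : Prop :=
  (∀ i < n, 1 ≤ x i) ∧ (0 < n → x 0 = 1) ∧
    ∀ i, i + 1 < n → x (i + 1) ≤ 1 + (Finset.range (i + 1)).sup x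

/-- `cnt n x k` is the number of indices `i < n` with `x i = k`. -/
def cnt (n : ℕ) (x : ℕ → ℕ) (k : ℕ) : ℕ :=
  ((Finset.range n).filter fun i => x i = k).card

/-- `dmax n x` is the largest label among `x 0, …, x (n-1)`. -/
def dmax (n : ℕ) (x : ℕ → ℕ) : ℕ :=
  (Finset.range n).sup x

/-- A `(χ,ρ)`-attachment sequence: a sequence of positive-integer valued random
variables encoding the linear preferential attachment tree with weights
`w_k = χ k + ρ`. -/
def IsAttachmentSeq {Ω : Type*} [MeasurableSpace Ω] (μ : Measure Ω) (χ ρ : ℝ)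
    (X : ℕ → Ω → ℕ) : Prop :=
  (∀ i, Measurable (X i)) ∧
  μ {ω | X 0 ω = 1} = 1 ∧
  ∀ n : ℕ, 1 ≤ n → ∀ x : ℕ → ℕ, Acceptable n x → ∀ k : ℕ, 1 ≤ k →
    μ {ω | X n ω = k ∧ ∀ i < n, X i ω = x i} =
      (if k ≤ dmax n x then
        ENNReal.ofReal (((cnt n x k : ℝ) - χ) / ((n : ℝ) + ρ))
      else if k = dmax n x + 1 then
        ENNReal.ofReal (((dmax n x : ℝ) * χ + ρ) / ((n : ℝ) + ρ))
      else 0) * μ {ω | ∀ i < n, X i ω = x i}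

open scoped ENNReal

section Acceptable

variable {n : ℕ} {x : ℕ → ℕ}

lemma Acceptable.of_succ (h : Acceptable (n + 1) x) : Acceptable n x :=
  ⟨fun i hi => h.1 i (by omega), fun hn => h.2.1 (by omega), fun i hi => h.2.2 i (by omega)⟩

lemma dmax_succ (n : ℕ) (x : ℕ → ℕ) : dmax (n + 1) x = max (x n) (dmax n x) := by
  simp [dmax, Finset.range_add_one]

lemma cnt_succ (n : ℕ) (x : ℕ → ℕ) (k : ℕ) :
    cnt (n + 1) x k = cnt n x k + if x n = k then 1 else 0 := by
  rw [cnt, Finset.range_add_one, Finset.filter_insert]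
  split_ifs
  · rw [Finset.card_insert_of_notMem (by simp), cnt]
  · simp [cnt]

lemma le_dmax {i : ℕ} (hi : i < n) : x i ≤ dmax n x :=
  Finset.le_sup (Finset.mem_range.mpr hi)

lemma cnt_dmax_add_one : cnt n x (dmax n x + 1) = 0 := by
  rw [cnt, Finset.card_eq_zero, Finset.filter_eq_empty_iff]
  intro i hi
  have := le_dmax (x := x) (Finset.mem_range.mp hi)
  omega

lemma Acceptable.one_le_dmax (hx : Acceptable n x) (hn : 0 < n) : 1 ≤ dmax n x :=
  hx.2.1 hn ▸ le_dmax hn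

lemma Acceptable.le_dmax_add_one (hx : Acceptable (n + 1) x) (hn : 1 ≤ n) :
    x n ≤ dmax n x + 1 := by
  have := hx.2.2 (n - 1) (by omega)
  rw [Nat.sub_add_cancel hn] at this
  rw [dmax]
  omega

lemma Acceptable.exists_eq_of_le_dmax (hx : Acceptable n x) {k : ℕ} (hk1 : 1 ≤ k)
    (hk : k ≤ dmax n x) : ∃ i < n, x i = k := by
  induction n with
  | zero => simp [dmax] at hk; omega
  | succ n ih =>
    rw [dmax_succ] at hk
    rcases le_or_gt k (dmax n x) with hold | hnew
    · obtain ⟨i, hi, hxi⟩ := ih hx.of_succ hold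
      exact ⟨i, by omega, hxi⟩
    · rcases Nat.eq_zero_or_pos n with rfl | hn
      · exact ⟨0, by omega, by have := hx.2.1 (by omega); omega⟩
      · exact ⟨n, by omega, by have := hx.le_dmax_add_one hn; omega⟩

lemma Acceptable.cnt_pos (hx : Acceptable n x) {k : ℕ} (hk1 : 1 ≤ k) (hk : k ≤ dmax n x) :
    0 < cnt n x k := by
  obtain ⟨i, hi, hxi⟩ := hx.exists_eq_of_le_dmax hk1 hk
  exact Finset.card_pos.mpr ⟨i, Finset.mem_filter.mpr ⟨Finset.mem_range.mpr hi, hxi⟩⟩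

end Acceptable

section Labels

lemma map_range_eq_of_perm {n : ℕ} {x x' : ℕ → ℕ}
    (h : (List.ofFn fun i : Fin n => x i).Perm (List.ofFn fun i : Fin n => x' i)) :
    (Finset.range n).val.map x = (Finset.range n).val.map x' := by
  have hofFn (y : ℕ → ℕ) : (List.ofFn fun i : Fin n => y i) = (List.range n).map y := by
    rw [List.ofFn_eq_map, ← List.map_coe_finRange_eq_range, List.map_map]
    rfl
  rw [hofFn, hofFn] at h
  simpa only [Finset.range_val, Multiset.range, Multiset.map_coe] using Multiset.coe_eq_coe.mpr h

lemma cnt_eq_count (n : ℕ) (x : ℕ → ℕ) (k : ℕ) :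
    cnt n x k = ((Finset.range n).val.map x).count k := by
  rw [Multiset.count_map, cnt, Finset.card, Finset.filter_val]
  exact congrArg _ (Multiset.filter_congr fun _ _ => eq_comm)

lemma dmax_eq_sup (n : ℕ) (x : ℕ → ℕ) : dmax n x = ((Finset.range n).val.map x).sup :=
  Finset.sup_def

end Labels

section PathProbability

variable {χ ρ : ℝ} {n : ℕ} {x : ℕ → ℕ}

noncomputable def attachNumerator (χ ρ : ℝ) (n : ℕ) (x : ℕ → ℕ) : ℝ≥0∞ :=
  (∏ k ∈ Icc 1 (dmax n x), ∏ j ∈ Ico 1 (cnt n x k), ENNReal.ofReal (j - χ)) *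
    ∏ k ∈ Ico 1 (dmax n x), ENNReal.ofReal (k * χ + ρ)

noncomputable def attachDenominator (ρ : ℝ) (n : ℕ) : ℝ≥0∞ :=
  ∏ m ∈ Ico 1 n, ENNReal.ofReal (m + ρ)

lemma attachNumerator_eq_of_perm {x' : ℕ → ℕ}
    (h : (List.ofFn fun i : Fin n => x i).Perm (List.ofFn fun i : Fin n => x' i)) :
    attachNumerator χ ρ n x = attachNumerator χ ρ n x' := by
  have hlabels := map_range_eq_of_perm h
  simp only [attachNumerator, dmax_eq_sup, cnt_eq_count, hlabels]

lemma attachNumerator_succ_of_le_dmax (hx : Acceptable (n + 1) x) (hold : x n ≤ dmax n x) :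
    attachNumerator χ ρ (n + 1) x =
      ENNReal.ofReal (cnt n x (x n) - χ) * attachNumerator χ ρ n x := by
  have hdmax : dmax (n + 1) x = dmax n x := by rw [dmax_succ]; omega
  have hmem : x n ∈ Icc 1 (dmax n x) := Finset.mem_Icc.mpr ⟨hx.1 n (by omega), hold⟩
  have hcnt_pos := hx.of_succ.cnt_pos (hx.1 n (by omega)) hold
  have hothers : ∏ k ∈ (Icc 1 (dmax n x)).erase (x n),
      ∏ j ∈ Ico 1 (cnt (n + 1) x k), ENNReal.ofReal (j - χ) =
        ∏ k ∈ (Icc 1 (dmax n x)).erase (x n),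
          ∏ j ∈ Ico 1 (cnt n x k), ENNReal.ofReal (j - χ) := by
    refine Finset.prod_congr rfl fun k hk => ?_
    rw [cnt_succ, if_neg (Finset.ne_of_mem_erase hk).symm, add_zero]
  rw [attachNumerator, attachNumerator, hdmax, ← Finset.mul_prod_erase _ _ hmem,
    ← Finset.mul_prod_erase _
      (fun k => ∏ j ∈ Ico 1 (cnt n x k), ENNReal.ofReal (j - χ)) hmem,
    hothers, cnt_succ, if_pos rfl, Finset.prod_Ico_succ_top hcnt_pos]
  ring

lemma attachNumerator_succ_of_eq_dmax_add_one (hn : 1 ≤ n) (hx : Acceptable (n + 1) x)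
    (hnew : x n = dmax n x + 1) :
    attachNumerator χ ρ (n + 1) x =
      ENNReal.ofReal (dmax n x * χ + ρ) * attachNumerator χ ρ n x := by
  have hdmax : dmax (n + 1) x = dmax n x + 1 := by rw [dmax_succ]; omega
  have hdmax_pos := hx.of_succ.one_le_dmax hn
  have hothers : ∀ k ∈ Icc 1 (dmax n x), cnt (n + 1) x k = cnt n x k := by
    intro k hk
    rw [cnt_succ, if_neg (by have := (Finset.mem_Icc.mp hk).2; omega), add_zero]
  rw [attachNumerator, attachNumerator, hdmax, Finset.prod_Icc_succ_top (by omega),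
    Finset.prod_Ico_succ_top hdmax_pos, Finset.prod_congr rfl fun k hk => by rw [hothers k hk],
    cnt_succ, if_pos hnew, cnt_dmax_add_one]
  simp only [zero_add, Finset.Ico_self, Finset.prod_empty, mul_one]
  ring

lemma attachDenominator_succ (hn : 1 ≤ n) :
    attachDenominator ρ (n + 1) = ENNReal.ofReal (n + ρ) * attachDenominator ρ n := by
  rw [attachDenominator, attachDenominator, Finset.prod_Ico_succ_top hn, mul_comm]

lemma attachDenominator_ne_zero (hρ : 0 < ρ) : attachDenominator ρ n ≠ 0 :=
  Finset.prod_ne_zero_iff.mpr fun m _ => (ENNReal.ofReal_pos.mpr (by positivity)).ne'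

lemma attachDenominator_ne_top : attachDenominator ρ n ≠ ⊤ :=
  ENNReal.prod_ne_top fun _ _ => ENNReal.ofReal_ne_top

lemma setOf_forall_lt_succ {Ω : Type*} (X : ℕ → Ω → ℕ) (n : ℕ) (x : ℕ → ℕ) :
    {ω | ∀ i < n + 1, X i ω = x i} = {ω | X n ω = x n ∧ ∀ i < n, X i ω = x i} := by
  ext ω
  simp only [Set.mem_ofPred_eq, Nat.forall_lt_succ_right, and_comm]

theorem IsAttachmentSeq.measure_path_eq {Ω : Type*} [MeasurableSpace Ω] {μ : Measure Ω}
    {X : ℕ → Ω → ℕ} (hX : IsAttachmentSeq μ χ ρ X) (hρ : 0 < ρ) (hn : 1 ≤ n)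
    (hx : Acceptable n x) :
    μ {ω | ∀ i < n, X i ω = x i} = attachNumerator χ ρ n x / attachDenominator ρ n := by
  induction n, hn using Nat.le_induction generalizing x with
  | base =>
    have hx0 : x 0 = 1 := hx.2.1 one_pos
    have hdmax : dmax 1 x = 1 := by simp [dmax, hx0]
    have hcnt : cnt 1 x 1 = 1 := by simp [cnt, Finset.filter_singleton, hx0]
    simp [hx0, hX.2.1, attachNumerator, attachDenominator, hdmax, hcnt]
  | succ n hn ih =>
    have hxn_pos : 1 ≤ x n := hx.1 n (by omega)
    have hnρ : (0 : ℝ) < n + ρ := by positivity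
    have hstep (a : ℝ)
        (ha : attachNumerator χ ρ (n + 1) x = ENNReal.ofReal a * attachNumerator χ ρ n x) :
        ENNReal.ofReal (a / (n + ρ)) * (attachNumerator χ ρ n x / attachDenominator ρ n) =
          attachNumerator χ ρ (n + 1) x / attachDenominator ρ (n + 1) := by
      rw [ha, attachDenominator_succ hn, ENNReal.ofReal_div_of_pos hnρ,
        ENNReal.mul_div_mul_comm (Or.inr attachDenominator_ne_top)
          (Or.inr (attachDenominator_ne_zero hρ))]
    rw [setOf_forall_lt_succ, hX.2.2 n hn x hx.of_succ (x n) hxn_pos, ih hx.of_succ]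
    by_cases hold : x n ≤ dmax n x
    · rw [if_pos hold, hstep _ (attachNumerator_succ_of_le_dmax hx hold)]
    · have hnew : x n = dmax n x + 1 := by have := hx.le_dmax_add_one hn; omega
      rw [if_neg hold, if_pos hnew,
        hstep _ (attachNumerator_succ_of_eq_dmax_add_one hn hx hnew)]

end PathProbability

theorem stmt2_attachment_exchangeable_general {Ω : Type*} [MeasurableSpace Ω]
    (μ : Measure Ω) (χ ρ : ℝ)
    (hχ : χ < 1) (hρ : ρ = 1 - χ)
    (X : ℕ → Ω → ℕ) (hX : IsAttachmentSeq μ χ ρ X)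
    (N : ℕ) (hN : 1 ≤ N) (x x' : ℕ → ℕ)
    (hx : Acceptable N x) (hx' : Acceptable N x')
    (hperm : (List.ofFn fun i : Fin N => x i).Perm (List.ofFn fun i : Fin N => x' i)) :
    μ {ω | ∀ i < N, X i ω = x i} = μ {ω | ∀ i < N, X i ω = x' i} := by
  have hρ_pos : 0 < ρ := by linarith
  rw [hX.measure_path_eq hρ_pos hN hx, hX.measure_path_eq hρ_pos hN hx',
    attachNumerator_eq_of_perm hperm]

/-- For a `(χ,ρ)`-attachment sequence (with `χ < 1`, `ρ = 1 - χ`,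
and `1/|χ|` a positive integer if `χ < 0`), any two acceptable sequences of length
`N` that are rearrangements (permutations) of one another have the same
probability. -/
theorem stmt2_attachment_exchangeable {Ω : Type*} [MeasurableSpace Ω]
    (μ : Measure Ω) [IsProbabilityMeasure μ] (χ ρ : ℝ)
    (hχ : χ < 1) (hρ : ρ = 1 - χ)
    (hint : χ < 0 → ∃ m : ℕ, 0 < m ∧ (m : ℝ) * |χ| = 1)
    (X : ℕ → Ω → ℕ) (hX : IsAttachmentSeq μ χ ρ X)
    (N : ℕ) (hN : 1 ≤ N) (x x' : ℕ → ℕ)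
    (hx : Acceptable N x) (hx' : Acceptable N x')
    (hperm : (List.ofFn fun i : Fin N => x i).Perm (List.ofFn fun i : Fin N => x' i)) :
    μ {ω | ∀ i < N, X i ω = x i} = μ {ω | ∀ i < N, X i ω = x' i} :=
  stmt2_attachment_exchangeable_general μ χ ρ hχ hρ X hX N hN x x' hx hx' hperm
end

section
/- Let 0 ≤ α < 1 and θ > 0, let (P^v)_{v∈ℕ*} be an i.i.d. family of random probability vectors whose common marginal distribution is that of a GEM(α, θ) stick-breaking sequence, and define Q := ∑_{m=1}^∞ ∑_{(i_1,…,i_m)∈ℕ^m} ∏_{j=1}^m (P^{(i_1,…,i_{j−1})}_{i_j})². Then E[Q] = (1 − α)/(θ + α). (For the parameters α = χ/(χ+ρ), θ = ρ/(χ+ρ) of the linear preferential attachment tree with weights w_k = χk + ρ, this value equals ρ/(χ + ρ).) -/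
open MeasureTheory ProbabilityTheory Finset
open scoped ENNReal NNReal

/-- The Beta(a, b) distribution on ℝ (supported on `(0,1)`), with density
`Γ(a+b)/(Γ(a)Γ(b)) x^(a-1) (1-x)^(b-1)` with respect to Lebesgue measure. -/
noncomputable def betaMeasure (a b : ℝ) : Measure ℝ :=
  (volume.restrict (Set.Ioo (0 : ℝ) 1)).withDensity fun x =>
    ENNReal.ofReal
      (Real.Gamma (a + b) / (Real.Gamma a * Real.Gamma b) * x ^ (a - 1) * (1 - x) ^ (b - 1))

/-! Along a path `(i_1, …, i_m)` the vectors `P^v` sit at distinct vertices, so by independence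
each path contributes `∏_j E[(P_{i_j})²]`, and summing over paths gives `E[Q] = ∑_{m ≥ 1} s^m`
with `s = ∑_k E[P_k²]`. By stick-breaking independence `E[P_k²] = (∏_{j<k} B_j) A_k` with the Beta
second moments `A_k = E[Z_k²]`, `B_j = E[(1-Z_j)²]`. For `f_k = (1-α)/(1+θ+kα)` one checks
`A_k = f_k - B_k f_{k+1}`, so the series telescopes to `s = f_0 = (1-α)/(1+θ)`, and
`E[Q] = s/(1-s) = (1-α)/(θ+α)`. -/

open Filter Topology

theorem ProbabilityTheory.iIndepFun.lintegral_prod_comp {Ω ι κ β : Type*} [MeasurableSpace Ω]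
    {μ : Measure Ω} [Fintype κ] [MeasurableSpace β] {X : ι → Ω → β}
    (hX : ∀ i, Measurable (X i)) (hind : iIndepFun X μ) {v : κ → ι} (hv : v.Injective)
    {g : κ → β → ℝ≥0∞} (hg : ∀ j, Measurable (g j)) :
    ∫⁻ ω, ∏ j, g j (X (v j) ω) ∂μ = ∏ j, ∫⁻ ω, g j (X (v j) ω) ∂μ :=
  lintegral_prod_eq_prod_lintegral_of_indepFun _ (fun j ω => g j (X (v j) ω))
    ((hind.precomp hv).comp g hg) fun j => (hg j).comp (hX _)

theorem ENNReal.tsum_fin_pi_prod {β : Type*} (e : β → ℝ≥0∞) (n : ℕ) :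
    ∑' i : Fin n → β, ∏ j, e (i j) = (∑' k, e k) ^ n := by
  induction n with
  | zero => simp
  | succ n ih =>
    rw [← (Fin.consEquiv fun _ => β).tsum_eq, ENNReal.tsum_prod', pow_succ', ← ih,
      ← ENNReal.tsum_mul_right]
    simp [Fin.consEquiv, Fin.prod_univ_succ, ENNReal.tsum_mul_left]

theorem ENNReal.tsum_ofReal_pow_succ {c : ℝ} (hc0 : 0 ≤ c) (hc1 : c < 1) :
    ∑' m : ℕ, ENNReal.ofReal c ^ (m + 1) = ENNReal.ofReal (c / (1 - c)) := by
  simp_rw [pow_succ', ENNReal.tsum_mul_left, ENNReal.tsum_geometric]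
  rw [← ENNReal.ofReal_one, ← ENNReal.ofReal_sub _ hc0,
    ← ENNReal.ofReal_inv_of_pos (by linarith), ← ENNReal.ofReal_mul hc0, div_eq_mul_inv]

theorem Real.Gamma_add_two {x : ℝ} (hx : 0 < x) :
    Real.Gamma (x + 2) = x * (x + 1) * Real.Gamma x := by
  rw [show x + 2 = x + 1 + 1 by ring, Real.Gamma_add_one (by positivity),
    Real.Gamma_add_one hx.ne']
  ring

theorem ProbabilityTheory.beta_comm (a b : ℝ) : beta a b = beta b a := by
  rw [beta, beta, mul_comm, add_comm]

noncomputable def betaSecondMoment (a b : ℝ) : ℝ := a * (a + 1) / ((a + b) * (a + b + 1))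

theorem betaSecondMoment_nonneg {a b : ℝ} (ha : 0 ≤ a) (hb : 0 ≤ b) :
    0 ≤ betaSecondMoment a b := by
  unfold betaSecondMoment; positivity

theorem ProbabilityTheory.beta_add_two_div_beta {a b : ℝ} (ha : 0 < a) (hb : 0 < b) :
    beta (a + 2) b / beta a b = betaSecondMoment a b := by
  have hΓa := Real.Gamma_pos_of_pos ha
  have hΓb := Real.Gamma_pos_of_pos hb
  have hΓab := Real.Gamma_pos_of_pos (add_pos ha hb)
  rw [beta, beta, betaSecondMoment, show a + 2 + b = a + b + 2 by ring, Real.Gamma_add_two ha,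
    Real.Gamma_add_two (add_pos ha hb)]
  field_simp

theorem lintegral_Ioo_rpow_mul_one_sub_rpow {a b : ℝ} (ha : 0 < a) (hb : 0 < b) :
    ∫⁻ x in Set.Ioo (0 : ℝ) 1, ENNReal.ofReal (x ^ (a - 1) * (1 - x) ^ (b - 1)) =
      ENNReal.ofReal (beta a b) := by
  have hβ := beta_pos ha hb
  have h := lintegral_betaPDF_eq_one ha hb
  simp_rw [lintegral_betaPDF, mul_assoc, ENNReal.ofReal_mul (one_div_pos.2 hβ).le] at h
  rw [lintegral_const_mul' _ _ ENNReal.ofReal_ne_top, mul_comm] at h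
  rw [ENNReal.eq_inv_of_mul_eq_one_left h, one_div, ENNReal.ofReal_inv_of_pos hβ, inv_inv]

theorem lintegral_pow_mul_one_sub_pow_betaMeasure {a b : ℝ} (ha : 0 < a) (hb : 0 < b)
    (p q : ℕ) :
    ∫⁻ x, ENNReal.ofReal x ^ p * ENNReal.ofReal (1 - x) ^ q ∂_root_.betaMeasure a b =
      ENNReal.ofReal (beta (a + p) (b + q) / beta a b) := by
  have hC : Real.Gamma (a + b) / (Real.Gamma a * Real.Gamma b) = 1 / beta a b := by
    rw [beta, one_div_div]
  have hC0 : 0 ≤ 1 / beta a b := (one_div_pos.2 (beta_pos ha hb)).le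
  rw [_root_.betaMeasure, lintegral_withDensity_eq_lintegral_mul _ (by fun_prop) (by fun_prop),
    setLIntegral_congr_fun measurableSet_Ioo (g := fun x => ENNReal.ofReal (1 / beta a b) *
      ENNReal.ofReal (x ^ (a + p - 1) * (1 - x) ^ (b + q - 1))),
    lintegral_const_mul' _ _ ENNReal.ofReal_ne_top,
    lintegral_Ioo_rpow_mul_one_sub_rpow (by positivity) (by positivity),
    ← ENNReal.ofReal_mul hC0, one_div_mul_eq_div]
  rintro x ⟨hx0, hx1⟩
  have h1x : 0 < 1 - x := by linarith
  dsimp only [Pi.mul_apply]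
  rw [hC, ← ENNReal.ofReal_pow hx0.le, ← ENNReal.ofReal_pow h1x.le,
    ← ENNReal.ofReal_mul (by positivity), ← ENNReal.ofReal_mul (by positivity),
    ← ENNReal.ofReal_mul hC0, show a + p - 1 = a - 1 + p by ring,
    show b + q - 1 = b - 1 + q by ring, Real.rpow_add_natCast hx0.ne',
    Real.rpow_add_natCast h1x.ne']
  ring_nf

theorem lintegral_sq_betaMeasure {a b : ℝ} (ha : 0 < a) (hb : 0 < b) :
    ∫⁻ x, ENNReal.ofReal x ^ 2 ∂_root_.betaMeasure a b =
      ENNReal.ofReal (betaSecondMoment a b) := by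
  simpa [beta_add_two_div_beta ha hb] using lintegral_pow_mul_one_sub_pow_betaMeasure ha hb 2 0

theorem lintegral_one_sub_sq_betaMeasure {a b : ℝ} (ha : 0 < a) (hb : 0 < b) :
    ∫⁻ x, ENNReal.ofReal (1 - x) ^ 2 ∂_root_.betaMeasure a b =
      ENNReal.ofReal (betaSecondMoment b a) := by
  simpa [beta_comm a, beta_add_two_div_beta hb ha] using
    lintegral_pow_mul_one_sub_pow_betaMeasure ha hb 0 2

def stickBreaking {Ω : Type*} (Z : ℕ → Ω → ℝ) (ω : Ω) (i : ℕ) : ℝ :=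
  Z i ω * ∏ j ∈ range i, (1 - Z j ω)

section StickBreaking

variable {Ω : Type*} [MeasurableSpace Ω] {μ : Measure Ω} {Z : ℕ → Ω → ℝ}

theorem measurable_stickBreaking (hZ : ∀ j, Measurable (Z j)) : Measurable (stickBreaking Z) :=
  measurable_pi_lambda _ fun i => (hZ i).mul (Finset.measurable_prod _ fun j _ => by fun_prop)

theorem lintegral_sq_stickBreaking (hZ : ∀ j, Measurable (Z j))
    (hZ01 : ∀ j ω, Z j ω ∈ Set.Icc (0 : ℝ) 1) (hind : iIndepFun Z μ) (k : ℕ) :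
    ∫⁻ ω, ENNReal.ofReal (stickBreaking Z ω k) ^ 2 ∂μ =
      (∏ j ∈ range k, ∫⁻ ω, ENNReal.ofReal (1 - Z j ω) ^ 2 ∂μ) *
        ∫⁻ ω, ENNReal.ofReal (Z k ω) ^ 2 ∂μ := by
  let g : Fin (k + 1) → ℝ → ℝ≥0∞ :=
    Fin.lastCases (fun x => ENNReal.ofReal x ^ 2) fun _ x => ENNReal.ofReal (1 - x) ^ 2
  have hg : ∀ j, Measurable (g j) := Fin.lastCases (by simp [g]; fun_prop) fun j => by
    simp only [g, Fin.lastCases_castSucc]; fun_prop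
  have hfactor : ∀ ω, ENNReal.ofReal (stickBreaking Z ω k) ^ 2 = ∏ j, g j (Z j ω) := fun ω => by
    rw [stickBreaking, ENNReal.ofReal_mul (hZ01 k ω).1,
      ENNReal.ofReal_prod_of_nonneg fun j _ => sub_nonneg.2 (hZ01 j ω).2, mul_pow, ← prod_pow,
      Fin.prod_univ_castSucc, mul_comm, ← Fin.prod_univ_eq_prod_range]
    simp [g]
  simp_rw [hfactor]
  rw [hind.lintegral_prod_comp hZ Fin.val_injective hg, Fin.prod_univ_castSucc,
    ← Fin.prod_univ_eq_prod_range]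
  simp [g]

end StickBreaking

theorem tendsto_prod_range_zero_of_le_one_sub_div {B : ℕ → ℝ} {K : ℝ} (hK : 0 < K)
    (hB0 : ∀ j, 0 ≤ B j) (hB : ∀ j : ℕ, B j ≤ 1 - K / (j + 1)) :
    Tendsto (fun n => ∏ j ∈ range n, B j) atTop (𝓝 0) := by
  have hexp : ∀ n, ∏ j ∈ range n, B j ≤ Real.exp (-(K * ∑ j ∈ range n, 1 / ((j : ℝ) + 1))) := by
    intro n
    rw [mul_sum, ← sum_neg_distrib, Real.exp_sum]
    refine prod_le_prod (fun j _ => hB0 j) fun j _ => (hB j).trans ?_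
    rw [mul_one_div]
    linarith [Real.add_one_le_exp (-(K / (j + 1)))]
  exact squeeze_zero (fun n => prod_nonneg fun j _ => hB0 j) hexp
    (Real.tendsto_exp_atBot.comp (tendsto_neg_atTop_atBot.comp
      (Real.tendsto_sum_range_one_div_nat_succ_atTop.const_mul_atTop hK)))

theorem hasSum_prod_range_mul_of_telescoping {f A B : ℕ → ℝ} (hA : ∀ k, 0 ≤ A k)
    (hB : ∀ k, 0 ≤ B k) (htel : ∀ k, A k = f k - B k * f (k + 1))
    (hlim : Tendsto (fun n => (∏ j ∈ range n, B j) * f n) atTop (𝓝 0)) :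
    HasSum (fun k => (∏ j ∈ range k, B j) * A k) (f 0) := by
  have hpartial : ∀ n, ∑ k ∈ range n, (∏ j ∈ range k, B j) * A k =
      f 0 - (∏ j ∈ range n, B j) * f n := by
    intro n
    induction n with
    | zero => simp
    | succ n ih => rw [sum_range_succ, ih, htel, prod_range_succ]; ring
  rw [hasSum_iff_tendsto_nat_of_nonneg fun k => mul_nonneg (prod_nonneg fun j _ => hB j) (hA k)]
  simp_rw [hpartial]
  simpa using hlim.const_sub (f 0)

-- `c (c + 1) / ((c + δ) (c + δ + 1)) ≤ c / (c + δ)` for `c = θ + (j + 1) α`, `δ = 1 - α`,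
-- and `c + δ ≤ (1 + θ) (j + 1)`.
theorem betaSecondMoment_le_one_sub_div {α θ : ℝ} (hα0 : 0 ≤ α) (hα1 : α < 1) (hθ : 0 < θ)
    (j : ℕ) :
    betaSecondMoment (θ + (j + 1) * α) (1 - α) ≤ 1 - (1 - α) / (1 + θ) / (j + 1) := by
  have hδ : 0 < 1 - α := by linarith
  have hc : 0 ≤ θ + (j + 1) * α := by positivity
  have hpos : 0 < 1 + θ + j * α := by positivity
  calc betaSecondMoment (θ + (j + 1) * α) (1 - α)
      ≤ (θ + (j + 1) * α) / (1 + θ + j * α) := by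
        rw [betaSecondMoment, show θ + (j + 1) * α + (1 - α) = 1 + θ + j * α by ring,
          div_le_div_iff₀ (by positivity) hpos]
        nlinarith [mul_nonneg hc hδ.le, mul_nonneg (mul_nonneg hc hδ.le) hpos.le]
    _ = 1 - (1 - α) / (1 + θ + j * α) := by field_simp; ring
    _ ≤ 1 - (1 - α) / (1 + θ) / (j + 1) := by
        rw [div_div]
        gcongr
        nlinarith [mul_nonneg (Nat.cast_nonneg (α := ℝ) j) hθ.le]

theorem betaSecondMoment_eq_sub_mul {α θ : ℝ} (hα0 : 0 ≤ α) (hθ : 0 < θ) (k : ℕ) :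
    betaSecondMoment (1 - α) (θ + (k + 1) * α) = (1 - α) / (1 + θ + k * α) -
      betaSecondMoment (θ + (k + 1) * α) (1 - α) * ((1 - α) / (1 + θ + (k + 1 : ℕ) * α)) := by
  have hk : 0 < 1 + θ + k * α := by positivity
  have hk1 : 0 < 1 + θ + (k + 1 : ℕ) * α := by positivity
  push_cast at hk1 ⊢
  rw [betaSecondMoment, betaSecondMoment, show 1 - α + (θ + (k + 1) * α) = 1 + θ + k * α by ring,
    show θ + (k + 1) * α + (1 - α) = 1 + θ + k * α by ring]
  field_simp
  ring

theorem hasSum_betaSecondMoment_GEM {α θ : ℝ} (hα0 : 0 ≤ α) (hα1 : α < 1) (hθ : 0 < θ) :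
    HasSum (fun k : ℕ => (∏ j ∈ range k, betaSecondMoment (θ + (j + 1) * α) (1 - α)) *
      betaSecondMoment (1 - α) (θ + (k + 1) * α)) ((1 - α) / (1 + θ)) := by
  have hδ : 0 < 1 - α := by linarith
  have hc : ∀ j : ℕ, 0 ≤ θ + (j + 1) * α := fun j => by positivity
  have hB0 := fun j => betaSecondMoment_nonneg (hc j) hδ.le
  have hf : ∀ k : ℕ, 0 ≤ (1 - α) / (1 + θ + k * α) ∧
      (1 - α) / (1 + θ + k * α) ≤ (1 - α) / (1 + θ) := fun k =>
    ⟨div_nonneg hδ.le (by positivity), div_le_div_of_nonneg_left hδ.le (by positivity)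
      (by nlinarith [mul_nonneg (Nat.cast_nonneg (α := ℝ) k) hα0])⟩
  have hlim := (tendsto_prod_range_zero_of_le_one_sub_div (by positivity) hB0
    (betaSecondMoment_le_one_sub_div hα0 hα1 hθ)).mul_const ((1 - α) / (1 + θ))
  rw [zero_mul] at hlim
  simpa using hasSum_prod_range_mul_of_telescoping (fun k => betaSecondMoment_nonneg hδ.le (hc k))
    hB0 (betaSecondMoment_eq_sub_mul hα0 hθ) (squeeze_zero
      (fun n => mul_nonneg (prod_nonneg fun j _ => hB0 j) (hf n).1)
      (fun n => mul_le_mul_of_nonneg_left (hf n).2 (prod_nonneg fun j _ => hB0 j)) hlim)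

theorem tsum_lintegral_sq_stickBreaking_GEM {Ω : Type*} [MeasurableSpace Ω] {μ : Measure Ω}
    {α θ : ℝ} (hα0 : 0 ≤ α) (hα1 : α < 1) (hθ : 0 < θ) {Z : ℕ → Ω → ℝ}
    (hZ : ∀ j, Measurable (Z j)) (hZ01 : ∀ j ω, Z j ω ∈ Set.Icc (0 : ℝ) 1)
    (hind : iIndepFun Z μ)
    (hlaw : ∀ j : ℕ, Measure.map (Z j) μ = _root_.betaMeasure (1 - α) (θ + (j + 1) * α)) :
    ∑' k, ∫⁻ ω, ENNReal.ofReal (stickBreaking Z ω k) ^ 2 ∂μ =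
      ENNReal.ofReal ((1 - α) / (1 + θ)) := by
  have hδ : 0 < 1 - α := by linarith
  have hb : ∀ j : ℕ, 0 < θ + (j + 1) * α := fun j => by positivity
  have hA : ∀ k, ∫⁻ ω, ENNReal.ofReal (Z k ω) ^ 2 ∂μ =
      ENNReal.ofReal (betaSecondMoment (1 - α) (θ + (k + 1) * α)) := fun k => by
    rw [← lintegral_sq_betaMeasure hδ (hb k), ← hlaw k, lintegral_map (by fun_prop) (hZ k)]
  have hB : ∀ j, ∫⁻ ω, ENNReal.ofReal (1 - Z j ω) ^ 2 ∂μ =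
      ENNReal.ofReal (betaSecondMoment (θ + (j + 1) * α) (1 - α)) := fun j => by
    rw [← lintegral_one_sub_sq_betaMeasure hδ (hb j), ← hlaw j,
      lintegral_map (by fun_prop) (hZ j)]
  have hB0 := fun j => betaSecondMoment_nonneg (hb j).le hδ.le
  have hGEM := hasSum_betaSecondMoment_GEM hα0 hα1 hθ
  simp_rw [lintegral_sq_stickBreaking hZ hZ01 hind, hA, hB,
    ← ENNReal.ofReal_prod_of_nonneg fun j _ => hB0 j,
    ← ENNReal.ofReal_mul (prod_nonneg fun j _ => hB0 j)]
  rw [← ENNReal.ofReal_tsum_of_nonneg (fun k => mul_nonneg (prod_nonneg fun j _ => hB0 j)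
    (betaSecondMoment_nonneg hδ.le (hb k).le)) hGEM.summable, hGEM.tsum_eq]

theorem List.ofFn_castLE_injective {β : Type*} {n : ℕ} (i : Fin n → β) :
    Function.Injective fun j : Fin n => List.ofFn fun t : Fin j.1 => i (Fin.castLE j.2.le t) :=
  fun j j' h => Fin.ext (by simpa using congrArg List.length h)

theorem stmt16_mean_Q_for_GEM_general {Ω : Type*} [MeasurableSpace Ω]
    (μ : Measure Ω) (α θ : ℝ)
    (hα0 : 0 ≤ α) (hα1 : α < 1) (hθ : 0 < θ)
    (P : List ℕ → Ω → ℕ → ℝ)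
    (hPmeas : ∀ v, Measurable (P v))
    (hiid : iIndepFun P μ)
    {Ω' : Type*} [MeasurableSpace Ω'] (μ' : Measure Ω')
    (Z : ℕ → Ω' → ℝ)
    (hZmeas : ∀ j, Measurable (Z j))
    (hZrange : ∀ j, ∀ ω, Z j ω ∈ Set.Icc (0 : ℝ) 1)
    (hZindep : iIndepFun Z μ')
    (hZlaw : ∀ j : ℕ, Measure.map (Z j) μ' = _root_.betaMeasure (1 - α) (θ + (j + 1) * α))
    (hmarginal : ∀ v : List ℕ,
      Measure.map (P v) μ =
        Measure.map (fun ω (i : ℕ) => Z i ω * ∏ j ∈ Finset.range i, (1 - Z j ω)) μ')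
    (Q : Ω → ℝ≥0∞)
    (hQ : Q = fun ω => ∑' (m : ℕ), ∑' (i : Fin (m + 1) → ℕ),
      ∏ j : Fin (m + 1),
        (ENNReal.ofReal
          (P (List.ofFn fun t : Fin j.1 => i (Fin.castLE j.2.le t)) ω (i j))) ^ 2) :
    ∫⁻ ω, Q ω ∂μ = ENNReal.ofReal ((1 - α) / (θ + α)) := by
  let s : ℕ → ℝ≥0∞ := fun k => ∫⁻ ω', ENNReal.ofReal (stickBreaking Z ω' k) ^ 2 ∂μ'
  have hP : ∀ v k, ∫⁻ ω, ENNReal.ofReal (P v ω k) ^ 2 ∂μ = s k := fun v k => by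
    have hg : Measurable fun p : ℕ → ℝ => ENNReal.ofReal (p k) ^ 2 := by fun_prop
    rw [← lintegral_map hg (hPmeas v), hmarginal v]
    exact lintegral_map hg (measurable_stickBreaking hZmeas)
  have hpath : ∀ m (i : Fin (m + 1) → ℕ), ∫⁻ ω, ∏ j : Fin (m + 1), ENNReal.ofReal
      (P (List.ofFn fun t : Fin j.1 => i (Fin.castLE j.2.le t)) ω (i j)) ^ 2 ∂μ =
      ∏ j, s (i j) := fun m i => by
    rw [hiid.lintegral_prod_comp hPmeas (List.ofFn_castLE_injective i)
      (g := fun j x => ENNReal.ofReal (x (i j)) ^ 2) fun j => by fun_prop]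
    exact prod_congr rfl fun j _ => hP _ _
  have hs : ∑' k, s k = ENNReal.ofReal ((1 - α) / (1 + θ)) :=
    tsum_lintegral_sq_stickBreaking_GEM hα0 hα1 hθ hZmeas hZrange hZindep hZlaw
  have hmeas : ∀ m (i : Fin (m + 1) → ℕ), Measurable fun ω => ∏ j : Fin (m + 1), ENNReal.ofReal
      (P (List.ofFn fun t : Fin j.1 => i (Fin.castLE j.2.le t)) ω (i j)) ^ 2 := by fun_prop
  rw [hQ, lintegral_tsum fun m => (Measurable.tsum (hmeas m)).aemeasurable]
  simp_rw [lintegral_tsum fun i => (hmeas _ i).aemeasurable, hpath, ENNReal.tsum_fin_pi_prod, hs]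
  rw [ENNReal.tsum_ofReal_pow_succ (by positivity) ((div_lt_one (by positivity)).2 (by linarith)),
    show 1 - (1 - α) / (1 + θ) = (θ + α) / (1 + θ) by field_simp; ring,
    div_div_div_cancel_right₀ (by positivity)]

/-- Let `0 ≤ α < 1`, `θ > 0`, and let `(P^v)_{v ∈ ℕ*}` be an
i.i.d. family of random probability vectors whose common marginal distribution is
that of a GEM(α, θ) stick-breaking sequence.  With
`Q := ∑_{m≥1} ∑_{(i_1,…,i_m)} ∏_{j=1}^m (P^{(i_1,…,i_{j-1})}_{i_j})²`
(the outer sum over `m : ℕ` enumerating tuple lengths `m + 1 ≥ 1`), one has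
`E[Q] = (1 - α)/(θ + α)`.  (For `α = χ/(χ+ρ)`, `θ = ρ/(χ+ρ)` this equals
`ρ/(χ+ρ)`.) -/
theorem stmt16_mean_Q_for_GEM {Ω : Type*} [MeasurableSpace Ω]
    (μ : Measure Ω) [IsProbabilityMeasure μ] (α θ : ℝ)
    (hα0 : 0 ≤ α) (hα1 : α < 1) (hθ : 0 < θ)
    (P : List ℕ → Ω → ℕ → ℝ)
    (hPmeas : ∀ v, Measurable (P v))
    (hiid : iIndepFun P μ)
    {Ω' : Type*} [MeasurableSpace Ω'] (μ' : Measure Ω') [IsProbabilityMeasure μ']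
    (Z : ℕ → Ω' → ℝ)
    (hZmeas : ∀ j, Measurable (Z j))
    (hZrange : ∀ j, ∀ ω, Z j ω ∈ Set.Icc (0 : ℝ) 1)
    (hZindep : iIndepFun Z μ')
    (hZlaw : ∀ j : ℕ, Measure.map (Z j) μ' = _root_.betaMeasure (1 - α) (θ + (j + 1) * α))
    (hmarginal : ∀ v : List ℕ,
      Measure.map (P v) μ =
        Measure.map (fun ω (i : ℕ) => Z i ω * ∏ j ∈ Finset.range i, (1 - Z j ω)) μ')
    (Q : Ω → ℝ≥0∞)
    (hQ : Q = fun ω => ∑' (m : ℕ), ∑' (i : Fin (m + 1) → ℕ),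
      ∏ j : Fin (m + 1),
        (ENNReal.ofReal
          (P (List.ofFn fun t : Fin j.1 => i (Fin.castLE j.2.le t)) ω (i j))) ^ 2) :
    ∫⁻ ω, Q ω ∂μ = ENNReal.ofReal ((1 - α) / (θ + α)) :=
  stmt16_mean_Q_for_GEM_general μ α θ hα0 hα1 hθ P hPmeas hiid μ' Z hZmeas hZrange hZindep hZlaw
    hmarginal Q hQ
end
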